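/- Let r₁, r₂, r₃, r₄ be a solution of the four-body system in the center-of-mass frame whose initial data satisfy mω r₂₄(0) = p₁₃(0) and p₂₄(0) = −mω r₁₃(0). Then the motion is a four-body choreography: with τ = π/(2ω), r₂(t) = r₁(t + τ), r₃(t) = r₁(t + 2τ), and r₄(t) = r₁(t + 3τ) for all t ∈ ℝ, so all four bodies traverse the same closed curve with successive time delays τ. -/

import Mathlib

/-!
The differences `r₁ - r₃` and `r₂ - r₄` are normal modes of frequency `ω`, the alternating sum
`r₁ - r₂ + r₃ - r₄` is a normal mode of frequency `2ω`, and the centre of mass `r₁ + r₂ + r₃ + r₄`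
moves freely, hence stays at the origin. A shift by `τ = π/(2ω)` is half a period of the
alternating mode, so it changes its sign, and a quarter period of the difference modes; the
conditions on the initial data say exactly that this quarter period carries `r₁ - r₃` to
`r₂ - r₄`. Together these give `r₁(t + τ) = r₂(t)`. The system and the conditions on the
initial data are invariant under the cyclic relabelling `1 → 2 → 3 → 4 → 1`, so also
`r₂(t + τ) = r₃(t)` and `r₃(t + τ) = r₄(t)`.
-/

noncomputable section

/-- The Euclidean plane. -/
abbrev Plane : Type := EuclideanSpace ℝ (Fin 2)

/-- A solution of the planar four-body system with pairwise quadratic potential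
`V = (mω²/4)(2‖r₁−r₂‖² + 2‖r₂−r₃‖² + 2‖r₃−r₄‖² + 2‖r₁−r₄‖² − ‖r₁−r₃‖² − ‖r₂−r₄‖²)`:
four twice differentiable curves satisfying Newton's equations
`rᵢ'' = −ω²((rᵢ − r_{i+1}) + (rᵢ − r_{i−1}) − ½(rᵢ − r_{i+2}))` (indices mod 4). -/
def IsFourBodySolution (ω : ℝ) (r₁ r₂ r₃ r₄ : ℝ → Plane) : Prop :=
  (Differentiable ℝ r₁ ∧ Differentiable ℝ (deriv r₁)) ∧
  (Differentiable ℝ r₂ ∧ Differentiable ℝ (deriv r₂)) ∧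
  (Differentiable ℝ r₃ ∧ Differentiable ℝ (deriv r₃)) ∧
  (Differentiable ℝ r₄ ∧ Differentiable ℝ (deriv r₄)) ∧
  (∀ t : ℝ, deriv (deriv r₁) t =
    (-(ω ^ 2)) • ((r₁ t - r₂ t) + (r₁ t - r₄ t) - (1 / 2 : ℝ) • (r₁ t - r₃ t))) ∧
  (∀ t : ℝ, deriv (deriv r₂) t =
    (-(ω ^ 2)) • ((r₂ t - r₃ t) + (r₂ t - r₁ t) - (1 / 2 : ℝ) • (r₂ t - r₄ t))) ∧
  (∀ t : ℝ, deriv (deriv r₃) t =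
    (-(ω ^ 2)) • ((r₃ t - r₄ t) + (r₃ t - r₂ t) - (1 / 2 : ℝ) • (r₃ t - r₁ t))) ∧
  (∀ t : ℝ, deriv (deriv r₄) t =
    (-(ω ^ 2)) • ((r₄ t - r₁ t) + (r₄ t - r₃ t) - (1 / 2 : ℝ) • (r₄ t - r₂ t)))

open Real

section Oscillation

variable {E : Type*} [NormedAddCommGroup E] [InnerProductSpace ℝ E]

structure IsOscillation (c : ℝ) (f : ℝ → E) : Prop where
  differentiable : Differentiable ℝ f
  differentiable_deriv : Differentiable ℝ (deriv f)
  deriv_deriv : ∀ t, deriv (deriv f) t = (-(c ^ 2)) • f t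

namespace IsOscillation

variable {c : ℝ} {f g : ℝ → E}

lemma of_hasDerivAt {f' : ℝ → E} (hf : ∀ t, HasDerivAt f (f' t) t)
    (hf' : ∀ t, HasDerivAt f' ((-(c ^ 2)) • f t) t) : IsOscillation c f := by
  have hderiv : deriv f = f' := funext fun t => (hf t).deriv
  refine ⟨fun t => (hf t).differentiableAt, ?_, fun t => ?_⟩ <;> rw [hderiv]
  · exact fun t => (hf' t).differentiableAt
  · exact (hf' t).deriv

lemma hasDerivAt (hf : IsOscillation c f) (t : ℝ) : HasDerivAt f (deriv f t) t :=
  (hf.differentiable t).hasDerivAt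

lemma hasDerivAt_deriv (hf : IsOscillation c f) (t : ℝ) :
    HasDerivAt (deriv f) ((-(c ^ 2)) • f t) t :=
  hf.deriv_deriv t ▸ (hf.differentiable_deriv t).hasDerivAt

lemma sub (hf : IsOscillation c f) (hg : IsOscillation c g) : IsOscillation c (f - g) :=
  of_hasDerivAt (f' := deriv f - deriv g) (fun t => (hf.hasDerivAt t).sub (hg.hasDerivAt t))
    fun t => ((hf.hasDerivAt_deriv t).sub (hg.hasDerivAt_deriv t)).congr_deriv (smul_sub ..).symm

/-- Conservation of the energy `‖f'‖² + c²‖f‖²`. -/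
lemma eq_zero (hf : IsOscillation c f) (h₀ : f 0 = 0) (h₀' : deriv f 0 = 0) : f = 0 := by
  set energy : ℝ → ℝ := fun t => ‖deriv f t‖ ^ 2 + c ^ 2 * ‖f t‖ ^ 2
  have henergy : ∀ t, HasDerivAt energy 0 t := fun t =>
    ((hf.hasDerivAt_deriv t).norm_sq.add ((hf.hasDerivAt t).norm_sq.const_mul (c ^ 2))).congr_deriv
      (by rw [inner_smul_right, real_inner_comm]; ring)
  have henergy_zero : ∀ t, energy t = 0 := fun t => by
    rw [is_const_of_deriv_eq_zero (fun t => (henergy t).differentiableAt)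
      (fun t => (henergy t).deriv) t 0]
    simp [energy, h₀, h₀']
  have hderiv : ∀ t, deriv f t = 0 := fun t => by
    have : ‖deriv f t‖ ^ 2 = 0 := by
      nlinarith [henergy_zero t, sq_nonneg c, sq_nonneg ‖f t‖, sq_nonneg ‖deriv f t‖]
    simpa using this
  exact funext fun t => (is_const_of_deriv_eq_zero hf.differentiable hderiv t 0).trans h₀

lemma eq_of_initial (hf : IsOscillation c f) (hg : IsOscillation c g) (h₀ : f 0 = g 0)
    (h₀' : deriv f 0 = deriv g 0) : f = g := by
  have hderiv : deriv (f - g) 0 = 0 := by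
    rw [((hf.hasDerivAt 0).sub (hg.hasDerivAt 0)).deriv, h₀', sub_self]
  exact sub_eq_zero.mp <| (hf.sub hg).eq_zero (by simp [h₀]) hderiv

end IsOscillation

lemma hasDerivAt_cos_smul_add_sin_smul (c : ℝ) (a b : E) (t : ℝ) :
    HasDerivAt (fun t => cos (c * t) • a + sin (c * t) • b)
      (c • (cos (c * t) • b + sin (c * t) • (-a))) t := by
  have hct : HasDerivAt (fun t => c * t) c t := by simpa using (hasDerivAt_id t).const_mul c
  exact ((hct.cos.smul_const a).add (hct.sin.smul_const b)).congr_deriv (by module)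

lemma isOscillation_cos_smul_add_sin_smul (c : ℝ) (a b : E) :
    IsOscillation c (fun t => cos (c * t) • a + sin (c * t) • b) :=
  .of_hasDerivAt (hasDerivAt_cos_smul_add_sin_smul c a b) fun t =>
    ((hasDerivAt_cos_smul_add_sin_smul c b (-a) t).const_smul c).congr_deriv (by module)

namespace IsOscillation

variable {c : ℝ} {f g : ℝ → E}

lemma eq_cos_smul_add_sin_smul (hf : IsOscillation c f) (hc : c ≠ 0) (t : ℝ) :
    f t = cos (c * t) • f 0 + sin (c * t) • (c⁻¹ • deriv f 0) := by
  refine congrFun (hf.eq_of_initial (isOscillation_cos_smul_add_sin_smul _ _ _) ?_ ?_) t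
  · simp
  · rw [(hasDerivAt_cos_smul_add_sin_smul _ _ _ 0).deriv]
    simp [smul_smul, hc]

lemma add_half_period (hf : IsOscillation c f) (hc : c ≠ 0) (t : ℝ) :
    f (t + π / c) = -f t := by
  rw [hf.eq_cos_smul_add_sin_smul hc, hf.eq_cos_smul_add_sin_smul hc t,
    show c * (t + π / c) = c * t + π by field_simp, cos_add_pi, sin_add_pi]
  module

lemma add_quarter_period (hf : IsOscillation c f) (hg : IsOscillation c g) (hc : c ≠ 0)
    (hfg : deriv f 0 = c • g 0) (hgf : deriv g 0 = (-c) • f 0) (t : ℝ) :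
    f (t + π / (2 * c)) = g t := by
  rw [hf.eq_cos_smul_add_sin_smul hc, hg.eq_cos_smul_add_sin_smul hc t, hfg, hgf,
    show c * (t + π / (2 * c)) = c * t + π / 2 by field_simp, cos_add_pi_div_two,
    sin_add_pi_div_two]
  match_scalars <;> field_simp

end IsOscillation

end Oscillation

/-- The conditions of the theorem on the initial data, with the mass cancelled. -/
structure IsChoreographicData (ω : ℝ) (r₁ r₂ r₃ r₄ : ℝ → Plane) : Prop where
  sum : r₁ 0 + r₂ 0 + r₃ 0 + r₄ 0 = 0
  sum_deriv : deriv r₁ 0 + deriv r₂ 0 + deriv r₃ 0 + deriv r₄ 0 = 0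
  deriv_sub₁₃ : deriv r₁ 0 - deriv r₃ 0 = ω • (r₂ 0 - r₄ 0)
  deriv_sub₂₄ : deriv r₂ 0 - deriv r₄ 0 = (-ω) • (r₁ 0 - r₃ 0)

lemma IsChoreographicData.rotate {ω : ℝ} {r₁ r₂ r₃ r₄ : ℝ → Plane}
    (h : IsChoreographicData ω r₁ r₂ r₃ r₄) : IsChoreographicData ω r₂ r₃ r₄ r₁ where
  sum := by linear_combination (norm := module) h.sum
  sum_deriv := by linear_combination (norm := module) h.sum_deriv
  deriv_sub₁₃ := by linear_combination (norm := module) h.deriv_sub₂₄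
  deriv_sub₂₄ := by linear_combination (norm := module) -h.deriv_sub₁₃

namespace IsFourBodySolution

variable {ω : ℝ} {r₁ r₂ r₃ r₄ : ℝ → Plane}

lemma rotate (h : IsFourBodySolution ω r₁ r₂ r₃ r₄) : IsFourBodySolution ω r₂ r₃ r₄ r₁ :=
  let ⟨d₁, d₂, d₃, d₄, e₁, e₂, e₃, e₄⟩ := h
  ⟨d₂, d₃, d₄, d₁, e₂, e₃, e₄, e₁⟩

lemma isOscillation_sub (h : IsFourBodySolution ω r₁ r₂ r₃ r₄) : IsOscillation ω (r₁ - r₃) := by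
  obtain ⟨⟨d₁, d₁'⟩, -, ⟨d₃, d₃'⟩, -, e₁, -, e₃, -⟩ := h
  refine .of_hasDerivAt (f' := deriv r₁ - deriv r₃)
    (fun t => (d₁ t).hasDerivAt.sub (d₃ t).hasDerivAt) fun t => ?_
  refine ((d₁' t).hasDerivAt.sub (d₃' t).hasDerivAt).congr_deriv ?_
  rw [e₁, e₃, Pi.sub_apply]
  module

lemma isOscillation_alternatingSum (h : IsFourBodySolution ω r₁ r₂ r₃ r₄) :
    IsOscillation (2 * ω) (r₁ - r₂ + r₃ - r₄) := by
  obtain ⟨⟨d₁, d₁'⟩, ⟨d₂, d₂'⟩, ⟨d₃, d₃'⟩, ⟨d₄, d₄'⟩, e₁, e₂, e₃, e₄⟩ := h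
  refine .of_hasDerivAt (f' := deriv r₁ - deriv r₂ + deriv r₃ - deriv r₄)
    (fun t => (((d₁ t).hasDerivAt.sub (d₂ t).hasDerivAt).add (d₃ t).hasDerivAt).sub
      (d₄ t).hasDerivAt) fun t => ?_
  refine ((((d₁' t).hasDerivAt.sub (d₂' t).hasDerivAt).add (d₃' t).hasDerivAt).sub
    (d₄' t).hasDerivAt).congr_deriv ?_
  rw [e₁, e₂, e₃, e₄]
  simp only [Pi.sub_apply, Pi.add_apply]
  module

lemma sum_eq_zero (h : IsFourBodySolution ω r₁ r₂ r₃ r₄)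
    (h₀ : r₁ 0 + r₂ 0 + r₃ 0 + r₄ 0 = 0)
    (h₀' : deriv r₁ 0 + deriv r₂ 0 + deriv r₃ 0 + deriv r₄ 0 = 0) (t : ℝ) :
    r₁ t + r₂ t + r₃ t + r₄ t = 0 := by
  obtain ⟨⟨d₁, d₁'⟩, ⟨d₂, d₂'⟩, ⟨d₃, d₃'⟩, ⟨d₄, d₄'⟩, e₁, e₂, e₃, e₄⟩ := h
  have hderiv : ∀ t, HasDerivAt (r₁ + r₂ + r₃ + r₄)
      (deriv r₁ t + deriv r₂ t + deriv r₃ t + deriv r₄ t) t := fun t =>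
    (((d₁ t).hasDerivAt.add (d₂ t).hasDerivAt).add (d₃ t).hasDerivAt).add (d₄ t).hasDerivAt
  have hfree : IsOscillation 0 (r₁ + r₂ + r₃ + r₄) :=
    .of_hasDerivAt (f' := deriv r₁ + deriv r₂ + deriv r₃ + deriv r₄) hderiv fun t =>
      ((((d₁' t).hasDerivAt.add (d₂' t).hasDerivAt).add (d₃' t).hasDerivAt).add
        (d₄' t).hasDerivAt).congr_deriv (by rw [e₁, e₂, e₃, e₄]; module)
  exact congrFun (hfree.eq_zero h₀ ((hderiv 0).deriv.trans h₀')) t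

lemma apply_eq_apply_add_quarter_period (h : IsFourBodySolution ω r₁ r₂ r₃ r₄)
    (hd : IsChoreographicData ω r₁ r₂ r₃ r₄) (hω : ω ≠ 0) (t : ℝ) :
    r₂ t = r₁ (t + π / (2 * ω)) := by
  have hsum := h.sum_eq_zero hd.sum hd.sum_deriv
  have hhalf := h.isOscillation_alternatingSum.add_half_period (mul_ne_zero two_ne_zero hω) t
  have hu := h.isOscillation_sub
  have hv := h.rotate.isOscillation_sub
  obtain ⟨⟨d₁, -⟩, ⟨d₂, -⟩, ⟨d₃, -⟩, ⟨d₄, -⟩, -⟩ := h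
  have hu' : deriv (r₁ - r₃) 0 = ω • (r₂ - r₄) 0 := by
    rw [deriv_sub (d₁ 0) (d₃ 0)]; exact hd.deriv_sub₁₃
  have hv' : deriv (r₂ - r₄) 0 = (-ω) • (r₁ - r₃) 0 := by
    rw [deriv_sub (d₂ 0) (d₄ 0)]; exact hd.deriv_sub₂₄
  have hquarter := hu.add_quarter_period hv hω hu' hv' t
  simp only [Pi.sub_apply, Pi.add_apply] at hquarter hhalf
  -- `4 r₁ = S + D + 2 (r₁ - r₃)` and `4 r₂ = S - D + 2 (r₂ - r₄)`, with `S` the sum and `D` the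
  -- alternating sum of the positions.
  linear_combination (norm := module) (1 / 4 : ℝ) • (hsum t - hsum (t + π / (2 * ω)) - hhalf)
    - (1 / 2 : ℝ) • hquarter

end IsFourBodySolution

/-- Under the choreography conditions on the initial data, the motion is
a four-body choreography: all four bodies traverse the same curve with successive time
delays `τ = π/(2ω)`. -/
theorem four_body_choreography (m ω : ℝ) (hm : 0 < m) (hω : 0 < ω)
    (r₁ r₂ r₃ r₄ : ℝ → Plane)
    (hsol : IsFourBodySolution ω r₁ r₂ r₃ r₄)
    (hcomr : r₁ 0 + r₂ 0 + r₃ 0 + r₄ 0 = 0)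
    (hcomp : m • deriv r₁ 0 + m • deriv r₂ 0 + m • deriv r₃ 0 + m • deriv r₄ 0 = 0)
    (hcos : (m * ω) • (r₂ 0 - r₄ 0) = m • deriv r₁ 0 - m • deriv r₃ 0)
    (hsin : m • deriv r₂ 0 - m • deriv r₄ 0 = (-(m * ω)) • (r₁ 0 - r₃ 0)) :
    ∀ t : ℝ,
      r₂ t = r₁ (t + Real.pi / (2 * ω))
      ∧ r₃ t = r₁ (t + 2 * (Real.pi / (2 * ω)))
      ∧ r₄ t = r₁ (t + 3 * (Real.pi / (2 * ω))) := by
  have hcancel := smul_right_injective Plane hm.ne'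
  have hd : IsChoreographicData ω r₁ r₂ r₃ r₄ :=
    ⟨hcomr, hcancel <| by simpa only [smul_add, smul_zero] using hcomp,
      hcancel <| by simpa only [smul_sub, mul_smul] using hcos.symm,
      hcancel <| by simpa only [smul_sub, ← mul_neg, mul_smul] using hsin⟩
  have h₁₂ := hsol.apply_eq_apply_add_quarter_period hd hω.ne'
  have h₂₃ := hsol.rotate.apply_eq_apply_add_quarter_period hd.rotate hω.ne'
  have h₃₄ := hsol.rotate.rotate.apply_eq_apply_add_quarter_period hd.rotate.rotate hω.ne'
  intro t
  refine ⟨h₁₂ t, ?_, ?_⟩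
  · rw [h₂₃, h₁₂]
    congr 1; ring
  · rw [h₃₄, h₂₃, h₁₂]
    congr 1; ring
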